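/- Let (φ_n)_{n∈ℕ} be a decreasing sequence of reals with φ_n > 1 for all n. Then for every n ≥ 2, E(φ_n^{H_{n,σ}}) ≤ φ_n · ∑_{k=1}^{n-1} σ(k, n−k) · ( E(φ_k^{H_{k,σ}}) + E(φ_{n−k}^{H_{n−k,σ}}) ), where E(φ_m^{H_{m,σ}}) = ∑_{t ∈ T_m} P_σ(t) φ_m^{h(t)}. -/
import Mathlib


inductive BTree
  | leaf : BTree
  | node : BTree → BTree → BTree
deriving DecidableEq

def BTree.size : BTree → ℕ
  | .leaf => 1
  | .node l r => l.size + r.size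

def BTree.height : BTree → ℕ
  | .leaf => 0
  | .node l r => 1 + max l.height r.height

noncomputable def Pσ (σ : ℕ → ℕ → ℝ) : BTree → ℝ
  | .leaf => 1
  | .node l r => σ l.size r.size * Pσ σ l * Pσ σ r

def trees : ℕ → Finset BTree
  | 0 => ∅
  | 1 => {BTree.leaf}
  | (n+2) => (Finset.Ico 1 (n+2)).attach.biUnion
      (fun k => ((trees k.1) ×ˢ (trees (n+2-k.1))).image (fun p => BTree.node p.1 p.2))
  decreasing_by
  · exact (Finset.mem_Ico.mp k.2).2
  · have h := (Finset.mem_Ico.mp k.2).1; omega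

noncomputable def expPow (σ : ℕ → ℕ → ℝ) (φ : ℝ) (n : ℕ) : ℝ :=
  ∑ t ∈ trees n, Pσ σ t * φ ^ t.height

noncomputable def expH (σ : ℕ → ℕ → ℝ) (n : ℕ) : ℝ :=
  ∑ t ∈ trees n, Pσ σ t * (t.height : ℝ)

lemma trees_size : ∀ n, ∀ t ∈ trees n, BTree.size t = n := by
  intro n
  induction n using Nat.strong_induction_on with
  | _ n ih =>
    match n with
    | 0 => simp [trees]
    | 1 => intro t ht; simp [trees] at ht; subst ht; rfl
    | (m+2) =>
      intro t ht
      rw [trees] at ht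
      simp only [Finset.mem_biUnion, Finset.mem_image, Finset.mem_attach, Finset.mem_product,
        true_and] at ht
      obtain ⟨⟨k, hk⟩, ⟨l, r⟩, ⟨hl, hr⟩, rfl⟩ := ht
      have hk' := Finset.mem_Ico.mp hk
      have h1 := ih k (by omega) l hl
      have h2 := ih (m+2-k) (by omega) r hr
      simp only [BTree.size, h1, h2]
      omega

lemma sum_trees (f : BTree → ℝ) (m : ℕ) :
    ∑ t ∈ trees (m+2), f t =
      ∑ k ∈ Finset.Ico 1 (m+2), ∑ l ∈ trees k, ∑ r ∈ trees (m+2-k), f (BTree.node l r) := by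
  rw [trees]
  rw [Finset.sum_biUnion]
  · rw [← Finset.sum_attach (Finset.Ico 1 (m+2))
      (fun k => ∑ l ∈ trees k, ∑ r ∈ trees (m+2-k), f (BTree.node l r))]
    refine Finset.sum_congr rfl ?_
    intro k _
    rw [Finset.sum_image, Finset.sum_product]
    intro p _ q _ h
    cases p; cases q; simpa [Prod.ext_iff] using h
  · intro a _ b _ hab
    simp only [Finset.disjoint_left, Finset.mem_image, Finset.mem_product]
    rintro t ⟨⟨l, r⟩, ⟨hl, hr⟩, rfl⟩ ⟨⟨l', r'⟩, ⟨hl', hr'⟩, heq⟩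
    cases heq
    exact hab (Subtype.ext ((trees_size _ _ hl).symm.trans (trees_size _ _ hl')))


lemma sum_sum_mul (A B : Finset BTree) (c : ℝ) (f g : BTree → ℝ) :
    ∑ l ∈ A, ∑ r ∈ B, c * (f l * g r) = c * ((∑ l ∈ A, f l) * (∑ r ∈ B, g r)) := by
  rw [Finset.sum_mul_sum, Finset.mul_sum]
  exact Finset.sum_congr rfl fun l _ => by rw [Finset.mul_sum]

lemma expand_aux (A B : Finset BTree) (c : ℝ) (p q F G : BTree → ℝ) :
    c * ((∑ l ∈ A, p l * F l) * (∑ r ∈ B, q r)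
      + (∑ l ∈ A, p l) * (∑ r ∈ B, q r * G r))
    = ∑ l ∈ A, ∑ r ∈ B, c * (p l * q r * (F l + G r)) := by
  rw [Finset.sum_mul_sum, Finset.sum_mul_sum, ← Finset.sum_add_distrib, Finset.mul_sum]
  refine Finset.sum_congr rfl fun l _ => ?_
  rw [← Finset.sum_add_distrib, Finset.mul_sum]
  refine Finset.sum_congr rfl fun r _ => ?_
  ring

lemma Pσ_nonneg (σ : ℕ → ℕ → ℝ) (hσ : ∀ i j, 0 ≤ σ i j) : ∀ t, 0 ≤ Pσ σ t := by
  intro t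
  induction t with
  | leaf => simp [Pσ]
  | node l r ihl ihr =>
    rw [Pσ]
    exact mul_nonneg (mul_nonneg (hσ _ _) ihl) ihr

lemma mass_le_one (σ : ℕ → ℕ → ℝ) (hσ : ∀ i j, 0 ≤ σ i j)
    (hsum : ∀ k, 2 ≤ k → ∑ i ∈ Finset.Ico 1 k, σ i (k - i) = 1) :
    ∀ n, ∑ t ∈ trees n, Pσ σ t ≤ 1 := by
  intro n
  induction n using Nat.strong_induction_on with
  | _ n ih =>
    match n with
    | 0 => simp [trees]
    | 1 => simp [trees, Pσ]
    | (m+2) =>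
      rw [sum_trees]
      have : ∀ k ∈ Finset.Ico 1 (m+2),
          ∑ l ∈ trees k, ∑ r ∈ trees (m+2-k), Pσ σ (BTree.node l r)
            ≤ σ k (m+2-k) := by
        intro k hk
        have hk' := Finset.mem_Ico.mp hk
        have hcalc : ∑ l ∈ trees k, ∑ r ∈ trees (m+2-k), Pσ σ (BTree.node l r)
            = σ k (m+2-k) * ((∑ l ∈ trees k, Pσ σ l) * (∑ r ∈ trees (m+2-k), Pσ σ r)) := by
          rw [← sum_sum_mul]
          refine Finset.sum_congr rfl fun l hl => Finset.sum_congr rfl fun r hr => ?_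
          rw [Pσ, trees_size _ _ hl, trees_size _ _ hr]
          ring
        rw [hcalc]
        calc σ k (m+2-k) * ((∑ l ∈ trees k, Pσ σ l) * (∑ r ∈ trees (m+2-k), Pσ σ r))
            ≤ σ k (m+2-k) * (1 * 1) := by
              refine mul_le_mul_of_nonneg_left ?_ (hσ _ _)
              refine mul_le_mul (ih k (by omega)) (ih (m+2-k) (by omega))
                (Finset.sum_nonneg fun t _ => Pσ_nonneg σ hσ t) zero_le_one
          _ = σ k (m+2-k) := by ring
      calc ∑ k ∈ Finset.Ico 1 (m+2), ∑ l ∈ trees k, ∑ r ∈ trees (m+2-k), Pσ σ (BTree.node l r)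
          ≤ ∑ k ∈ Finset.Ico 1 (m+2), σ k (m+2-k) := Finset.sum_le_sum this
        _ = 1 := hsum (m+2) (by omega)

theorem recursive_estimate (σ : ℕ → ℕ → ℝ)
    (hrange : ∀ i j, 0 ≤ σ i j ∧ σ i j ≤ 1)
    (hsum : ∀ k, 2 ≤ k → ∑ i ∈ Finset.Ico 1 k, σ i (k - i) = 1)
    (φ : ℕ → ℝ) (hφdec : Antitone φ) (hφ : ∀ n, 1 < φ n) :
    ∀ n, 2 ≤ n →
      expPow σ (φ n) n ≤
        φ n * ∑ k ∈ Finset.Ico 1 n, σ k (n - k) *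
          (expPow σ (φ k) k + expPow σ (φ (n - k)) (n - k)) := by
  intro n hn
  have hσ : ∀ i j, 0 ≤ σ i j := fun i j => (hrange i j).1
  obtain ⟨m, rfl⟩ : ∃ m, n = m + 2 := ⟨n - 2, by omega⟩
  set n := m + 2 with hndef
  rw [expPow, sum_trees, Finset.mul_sum]
  refine Finset.sum_le_sum ?_
  intro k hk
  have hk' := Finset.mem_Ico.mp hk
  have hφn0 : (0:ℝ) ≤ φ n := le_of_lt (lt_trans one_pos (hφ n))
  -- termwise bound then algebra
  have step1 : ∑ l ∈ trees k, ∑ r ∈ trees (n-k),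
        Pσ σ (BTree.node l r) * φ n ^ (BTree.node l r).height
      ≤ φ n * (σ k (n-k) *
          ((∑ l ∈ trees k, Pσ σ l * φ k ^ l.height) * (∑ r ∈ trees (n-k), Pσ σ r)
          + (∑ l ∈ trees k, Pσ σ l) * (∑ r ∈ trees (n-k), Pσ σ r * φ (n-k) ^ r.height))) := by
    have hrw : φ n * (σ k (n-k) *
          ((∑ l ∈ trees k, Pσ σ l * φ k ^ l.height) * (∑ r ∈ trees (n-k), Pσ σ r)
          + (∑ l ∈ trees k, Pσ σ l) * (∑ r ∈ trees (n-k), Pσ σ r * φ (n-k) ^ r.height)))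
        = ∑ l ∈ trees k, ∑ r ∈ trees (n-k),
            φ n * (σ k (n-k) * (Pσ σ l * Pσ σ r * (φ k ^ l.height + φ (n-k) ^ r.height))) := by
      rw [expand_aux, Finset.mul_sum]
      refine Finset.sum_congr rfl fun l _ => ?_
      rw [Finset.mul_sum]
    rw [hrw]
    refine Finset.sum_le_sum ?_
    intro l hl
    refine Finset.sum_le_sum ?_
    intro r hr
    rw [Pσ, trees_size _ _ hl, trees_size _ _ hr]
    have hpow : φ n ^ (BTree.node l r).height
        ≤ φ n * (φ k ^ l.height + φ (n-k) ^ r.height) := by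
      show φ n ^ (1 + max l.height r.height) ≤ _
      rw [pow_add, pow_one]
      refine mul_le_mul_of_nonneg_left ?_ hφn0
      have h1 : φ n ^ l.height ≤ φ k ^ l.height :=
        pow_le_pow_left₀ hφn0 (hφdec (by omega : k ≤ n)) _
      have h2 : φ n ^ r.height ≤ φ (n-k) ^ r.height :=
        pow_le_pow_left₀ hφn0 (hφdec (by omega : n - k ≤ n)) _
      have hk0 : (0:ℝ) ≤ φ k ^ l.height :=
        pow_nonneg (le_of_lt (lt_trans one_pos (hφ k))) _
      have hnk0 : (0:ℝ) ≤ φ (n-k) ^ r.height :=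
        pow_nonneg (le_of_lt (lt_trans one_pos (hφ (n-k)))) _
      rcases max_cases l.height r.height with ⟨hm, _⟩ | ⟨hm, _⟩ <;> rw [hm] <;> linarith
    calc σ k (n-k) * Pσ σ l * Pσ σ r * φ n ^ (BTree.node l r).height
        ≤ σ k (n-k) * Pσ σ l * Pσ σ r * (φ n * (φ k ^ l.height + φ (n-k) ^ r.height)) := by
          refine mul_le_mul_of_nonneg_left hpow ?_
          exact mul_nonneg (mul_nonneg (hσ _ _) (Pσ_nonneg σ hσ l)) (Pσ_nonneg σ hσ r)
      _ = φ n * (σ k (n-k) * (Pσ σ l * Pσ σ r * (φ k ^ l.height + φ (n-k) ^ r.height))) := by ring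
  refine le_trans step1 ?_
  refine mul_le_mul_of_nonneg_left ?_ hφn0
  refine mul_le_mul_of_nonneg_left ?_ (hσ _ _)
  rw [expPow, expPow]
  have hE1 : (0:ℝ) ≤ ∑ l ∈ trees k, Pσ σ l * φ k ^ l.height :=
    Finset.sum_nonneg fun t _ => mul_nonneg (Pσ_nonneg σ hσ t)
      (pow_nonneg (le_of_lt (lt_trans one_pos (hφ _))) _)
  have hE2 : (0:ℝ) ≤ ∑ r ∈ trees (n-k), Pσ σ r * φ (n-k) ^ r.height :=
    Finset.sum_nonneg fun t _ => mul_nonneg (Pσ_nonneg σ hσ t)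
      (pow_nonneg (le_of_lt (lt_trans one_pos (hφ _))) _)
  have hm1 : ∑ l ∈ trees k, Pσ σ l ≤ 1 := mass_le_one σ hσ hsum k
  have hm2 : ∑ r ∈ trees (n-k), Pσ σ r ≤ 1 := mass_le_one σ hσ hsum (n-k)
  have hm1' : (0:ℝ) ≤ ∑ l ∈ trees k, Pσ σ l :=
    Finset.sum_nonneg fun t _ => Pσ_nonneg σ hσ t
  have hm2' : (0:ℝ) ≤ ∑ r ∈ trees (n-k), Pσ σ r :=
    Finset.sum_nonneg fun t _ => Pσ_nonneg σ hσ t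
  have h1 : (∑ l ∈ trees k, Pσ σ l * φ k ^ l.height) * (∑ r ∈ trees (n-k), Pσ σ r)
      ≤ ∑ l ∈ trees k, Pσ σ l * φ k ^ l.height := by
    nlinarith
  have h2 : (∑ l ∈ trees k, Pσ σ l) * (∑ r ∈ trees (n-k), Pσ σ r * φ (n-k) ^ r.height)
      ≤ ∑ r ∈ trees (n-k), Pσ σ r * φ (n-k) ^ r.height := by
    nlinarith
  linarith
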